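/- arXiv:1412.8247 — 2 statements merged into one kernel-verified Lean document; each statement's English description precedes it below -/
import Mathlib

section
/- Let A_i, B_i ∈ ℂ² for i in a finite index set and C_i ∈ ℂ. Define the 2×2 matrix M = 1 − Σ_i C_i |A_i⟩[B_i|, where |A⟩[B| denotes the rank-one matrix with entries A_a · (εB)_b with ε the antisymmetric 2×2 matrix ε = [[0,-1],[1,0]]. Then det M = 1 − Σ_i C_i [B_i|A_i⟩ + Σ_{i<j} C_i C_j [A_i|A_j⟩[B_i|B_j⟩, where [x|y⟩ := x₀y₁ − x₁y₀. -/
/-- The holomorphic skew bracket `[x|y⟩ = x₀y₁ − x₁y₀` of two spinors. -/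
noncomputable def skb (x y : Fin 2 → ℂ) : ℂ := x 0 * y 1 - x 1 * y 0

/-- The rank-one matrix `|A⟩[B|` with entries `A_a (εB)_b`, where `ε = [[0,-1],[1,0]]`. -/
noncomputable def outer (A B : Fin 2 → ℂ) : Matrix (Fin 2) (Fin 2) ℂ :=
  fun a b => A a * (![-(B 1), B 0]) b

lemma aux_offdiag {n : ℕ} (g : Fin n → Fin n → ℂ) (hg : ∀ i, g i i = 0) :
    ∑ i, ∑ j, g i j = ∑ i, ∑ j ∈ Finset.Ioi i, (g j i + g i j) := by
  rw [Finset.sum_sum_Ioi_add_eq_sum_sum_off_diag g, Finset.sum_comm]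
  refine Finset.sum_congr rfl fun i _ => ?_
  rw [← Finset.sum_compl_add_sum ({i}ᶜ) (fun j => g j i)]
  simp only [compl_compl, Finset.sum_singleton, hg, zero_add]

theorem stmt_1 (n : ℕ) (A B : Fin n → Fin 2 → ℂ) (C : Fin n → ℂ)
    (M : Matrix (Fin 2) (Fin 2) ℂ)
    (hM : M = 1 - ∑ i, C i • outer (A i) (B i)) :
    M.det = 1 - (∑ i, C i * skb (B i) (A i))
      + ∑ i, ∑ j ∈ Finset.Ioi i, C i * C j * skb (A i) (A j) * skb (B i) (B j) := by
  subst hM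
  set g : Fin n → Fin n → ℂ := fun i j =>
    (C i * (A i 0 * (-(B i 1)))) * (C j * (A j 1 * (B j 0)))
      - (C i * (A i 0 * (B i 0))) * (C j * (A j 1 * (-(B j 1)))) with hgdef
  have hkey : ∑ i, ∑ j, g i j
      = ∑ i, ∑ j ∈ Finset.Ioi i, C i * C j * skb (A i) (A j) * skb (B i) (B j) := by
    rw [aux_offdiag g (fun i => by simp [hgdef]; ring)]
    refine Finset.sum_congr rfl fun i _ => Finset.sum_congr rfl fun j _ => ?_
    simp only [hgdef, skb]; ring
  rw [Matrix.det_fin_two]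
  simp only [Matrix.sub_apply, Matrix.one_apply, Finset.sum_apply, Matrix.sum_apply,
    Matrix.smul_apply, outer, smul_eq_mul, Matrix.cons_val_zero, Matrix.cons_val_one,
    Matrix.head_cons]
  norm_num
  rw [← hkey]
  rw [show ∀ s1 s2 s3 s4 : ℂ, (1 + s1) * (1 - s2) + s3 * s4
      = 1 - (s2 - s1) + (s3 * s4 - s1 * s2) from fun _ _ _ _ => by ring]
  rw [Finset.sum_mul_sum, Finset.sum_mul_sum]
  congr 1
  · congr 1
    rw [← Finset.sum_sub_distrib]
    refine Finset.sum_congr rfl fun i _ => ?_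
    simp only [skb]; ring
  · rw [← Finset.sum_sub_distrib]
    refine Finset.sum_congr rfl fun i _ => ?_
    rw [← Finset.sum_sub_distrib]
    refine Finset.sum_congr rfl fun j _ => ?_
    simp only [hgdef]; ring
end

section
/- For all nonnegative integers J and J', the sum C_BF(J,J') := Σ_{K=0}^{J'} (−1)^{J'−K} · (J+J'−K)! · (J+2J'−2K+1) / (J! · (J'−K)! · K! · (J+2J'−K+1)!) satisfies C_BF(J,J') = (if J' = 0 then 1/J! else 0). -/
/-!
Substituting `K ↦ J' - K` and multiplying by `J! J'!` turns the sum into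
`∑_{K ≤ m} (-1)^K C(m,K) (J+K)! (J+2K+1) / (J+m+K+1)!` with `m = J'`.
For `m = p + 1` this telescopes: its `K`-th term is `g(K) - g(K-1)` (with `g(-1) = 0`) for
`g(n) = (-1)^n C(p,n) (J+n+1)! / (J+p+n+2)!`, and `g(p+1) = 0`. The one-step identity reduces,
after clearing factorials, to `C(p+1,n+1)(J+2n+3) = C(p,n+1)(J+n+2) + C(p,n)(J+p+n+3)`,
which is Pascal's rule together with `C(p,n+1)(n+1) = C(p,n)(p-n)`.
-/

open Nat

theorem choose_succ_succ_mul_add (J p n : ℕ) :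
    (p + 1).choose (n + 1) * (J + 2 * n + 3)
      = p.choose (n + 1) * (J + n + 2) + p.choose n * (J + p + n + 3) := by
  have hsucc := Nat.choose_succ_right_eq p n
  rw [Nat.choose_succ_succ]
  rcases le_or_gt n p with hn | hn
  · obtain ⟨d, rfl⟩ := Nat.exists_eq_add_of_le hn
    rw [Nat.add_sub_cancel_left] at hsucc
    linear_combination hsucc
  · simp [Nat.choose_eq_zero_of_lt hn, Nat.choose_eq_zero_of_lt (hn.trans (Nat.lt_succ_self n))]

def reflectedSummand (J m K : ℕ) : ℚ :=
  (-1) ^ K * m.choose K * (J + K)! * ((J + 2 * K + 1 : ℕ) : ℚ) / (J + m + K + 1)!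

def telescopeTerm (J p n : ℕ) : ℚ :=
  (-1) ^ n * p.choose n * (J + n + 1)! / (J + p + n + 2)!

theorem telescopeTerm_zero (J p : ℕ) : telescopeTerm J p 0 = reflectedSummand J (p + 1) 0 := by
  rw [telescopeTerm, reflectedSummand, show J + (p + 1) + 0 + 1 = J + p + 0 + 2 by ring,
    Nat.factorial_succ]
  simp only [Nat.choose_zero_right, add_zero, mul_zero]
  push_cast
  ring

theorem telescopeTerm_succ_sub (J p n : ℕ) :
    telescopeTerm J p (n + 1) - telescopeTerm J p n = reflectedSummand J (p + 1) (n + 1) := by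
  have key : ((p + 1).choose (n + 1) : ℚ) * (J + 2 * n + 3)
      = p.choose (n + 1) * (J + n + 2) + p.choose n * (J + p + n + 3) := by
    exact_mod_cast choose_succ_succ_mul_add J p n
  rw [telescopeTerm, telescopeTerm, reflectedSummand,
    show J + (p + 1) + (n + 1) + 1 = J + p + n + 2 + 1 by ring,
    show J + p + (n + 1) + 2 = J + p + n + 2 + 1 by ring, ← Nat.add_assoc J n 1,
    Nat.factorial_succ (J + n + 1), Nat.factorial_succ (J + p + n + 2)]
  push_cast
  field_simp
  linear_combination (-1 : ℚ) ^ n * key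

theorem sum_reflectedSummand (J m : ℕ) :
    ∑ K ∈ Finset.range (m + 1), reflectedSummand J m K = if m = 0 then 1 else 0 := by
  rcases m with _ | p
  · rw [Finset.sum_range_one, if_pos rfl, reflectedSummand, Nat.factorial_succ (J + 0 + 0)]
    simp only [Nat.choose_self, add_zero, mul_zero]
    push_cast
    field_simp
  · have top : telescopeTerm J p (p + 1) = 0 := by simp [telescopeTerm]
    rw [Finset.sum_range_succ', ← Finset.sum_congr rfl fun n _ => telescopeTerm_succ_sub J p n,
      Finset.sum_range_sub, top, ← telescopeTerm_zero]
    simp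

theorem summand_eq_reflectedSummand (J m K : ℕ) (hK : K ≤ m) :
    (-1 : ℚ) ^ (m - K) * ((J + m - K)! : ℚ) * ((J + 2 * m - 2 * K + 1 : ℕ) : ℚ) /
        ((J ! : ℚ) * ((m - K)! : ℚ) * (K ! : ℚ) * ((J + 2 * m - K + 1)! : ℚ))
      = reflectedSummand J m (m - K) / (J ! * m !) := by
  obtain ⟨k, rfl⟩ := Nat.exists_eq_add_of_le' hK
  rw [reflectedSummand, Nat.add_sub_cancel, Nat.cast_add_choose,
    show J + (k + K) - K = J + k by omega,
    show J + 2 * (k + K) - 2 * K + 1 = J + 2 * k + 1 by omega,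
    show J + 2 * (k + K) - K + 1 = J + (k + K) + k + 1 by omega]
  field_simp

open Nat in
theorem stmt_4 (J J' : ℕ) :
    (∑ K ∈ Finset.range (J' + 1),
      (-1 : ℚ) ^ (J' - K) * (Nat.factorial (J + J' - K) : ℚ)
          * ((J + 2 * J' - 2 * K + 1 : ℕ) : ℚ) /
        ((Nat.factorial J : ℚ) * (Nat.factorial (J' - K) : ℚ) * (Nat.factorial K : ℚ)
          * (Nat.factorial (J + 2 * J' - K + 1) : ℚ)))
    = if J' = 0 then 1 / (Nat.factorial J : ℚ) else 0 := by
  have reflect := Finset.sum_range_reflect (reflectedSummand J J') (J' + 1)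
  simp only [add_tsub_cancel_right] at reflect
  rw [Finset.sum_congr rfl fun K hK =>
      summand_eq_reflectedSummand J J' K (Finset.mem_range_succ_iff.mp hK),
    ← Finset.sum_div, reflect, sum_reflectedSummand]
  split_ifs with hJ'
  · simp [hJ']
  · simp
end
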